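/- Let t1 and t2 be two tetrahedra in R^3 with disjoint interiors whose vertical projections to R^2 have overlapping interiors. Then exactly one of t1 ≺ t2 or t2 ≺ t1 holds, where t ≺ s means: for every point (x,y) in the interior of the intersection of the projections, the intersection of the vertical line through (x,y) with t lies entirely below its intersection with s. -/
import Mathlib

/-- The vertical projection `ℝ³ → ℝ²` deleting the `z`-coordinate. -/
def vproj (p : Fin 3 → ℝ) : Fin 2 → ℝ := ![p 0, p 1]

/-- `t` lies in front of (below) `s` from the viewpoint `(0,0,-∞)`: over every point in
the interior of the intersection of the vertical projections, the intersection of the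
vertical line with `t` lies entirely below its intersection with `s`. -/
def IsBelow (t s : Set (Fin 3 → ℝ)) : Prop :=
  ∀ v ∈ interior (vproj '' t ∩ vproj '' s), ∀ p ∈ t, ∀ q ∈ s,
    p 0 = v 0 → p 1 = v 1 → q 0 = v 0 → q 1 = v 1 → p 2 ≤ q 2

open Set Filter Topology

noncomputable section

def lift3 (w : Fin 2 → ℝ) (z : ℝ) : Fin 3 → ℝ := ![w 0, w 1, z]

lemma lift3_zero (w : Fin 2 → ℝ) (z : ℝ) : lift3 w z 0 = w 0 := rfl
lemma lift3_one (w : Fin 2 → ℝ) (z : ℝ) : lift3 w z 1 = w 1 := rfl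
lemma lift3_two (w : Fin 2 → ℝ) (z : ℝ) : lift3 w z 2 = z := rfl

lemma eq_lift3 {p : Fin 3 → ℝ} {v : Fin 2 → ℝ} (h0 : p 0 = v 0) (h1 : p 1 = v 1) :
    p = lift3 v (p 2) := by
  funext i; fin_cases i <;> simp [lift3, h0, h1]

lemma vproj_isLinear : IsLinearMap ℝ vproj := by
  constructor
  · intro x y; funext i; fin_cases i <;> simp [vproj]
  · intro c x; funext i; fin_cases i <;> simp [vproj]

lemma vproj_eq_of {p : Fin 3 → ℝ} {v : Fin 2 → ℝ} (h : vproj p = v) :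
    p 0 = v 0 ∧ p 1 = v 1 := by
  constructor
  · rw [← h]; rfl
  · rw [← h]; rfl

lemma continuous_lift3 (z : ℝ) : Continuous fun w : Fin 2 → ℝ => lift3 w z := by
  apply continuous_pi
  intro i
  fin_cases i
  · simpa [lift3] using continuous_apply (0 : Fin 2)
  · simpa [lift3] using continuous_apply (1 : Fin 2)
  · simpa [lift3] using (continuous_const : Continuous fun _ : Fin 2 → ℝ => z)

lemma lift3_mem_openSegment {w : Fin 2 → ℝ} {a b z : ℝ} (hab : a < z) (hzb : z < b) :
    lift3 w z ∈ openSegment ℝ (lift3 w a) (lift3 w b) := by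
  have hba : b - a > 0 := by linarith
  refine ⟨1 - (z - a) / (b - a), (z - a) / (b - a), ?_, ?_, by ring, ?_⟩
  · have : (z - a) / (b - a) < 1 := by
      rw [div_lt_one hba]; linarith
    linarith
  · exact div_pos (by linarith) hba
  · funext i
    fin_cases i <;>
      simp [lift3, Matrix.cons_val_zero, Matrix.cons_val_one] <;> field_simp <;> ring

/-- A point over an interior point of the shadow, strictly between two fiber points
of which one is interior, is interior. -/
lemma between_interior (hK : Convex ℝ K) {v : Fin 2 → ℝ} {a b z : ℝ}
    (ha : lift3 v a ∈ interior K) (hb : lift3 v b ∈ K)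
    (h : (a < z ∧ z < b) ∨ (b < z ∧ z < a)) : lift3 v z ∈ interior K := by
  rcases h with ⟨h1, h2⟩ | ⟨h1, h2⟩
  · exact hK.openSegment_interior_self_subset_interior ha hb (lift3_mem_openSegment h1 h2)
  · exact hK.openSegment_self_interior_subset_interior hb ha (lift3_mem_openSegment h1 h2)

/-- Over an interior point of the shadow of a convex body with nonempty interior,
there is an interior point of the body. -/
lemma exists_interior_lift (hK : Convex ℝ K) (hne : (interior K).Nonempty)
    {v : Fin 2 → ℝ} (hv : v ∈ interior (vproj '' K)) :
    ∃ z, lift3 v z ∈ interior K := by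
  obtain ⟨p0, hp0⟩ := hne
  set w0 := vproj p0 with hw0
  have hcont : Continuous fun ε : ℝ => v + ε • (v - w0) := by continuity
  have hmem : vproj '' K ∈ 𝓝 v := mem_interior_iff_mem_nhds.1 hv
  have hev : ∀ᶠ ε in 𝓝 (0 : ℝ), v + ε • (v - w0) ∈ vproj '' K := by
    have ht : Filter.Tendsto (fun ε : ℝ => v + ε • (v - w0)) (𝓝 0) (𝓝 v) := by
      have h := hcont.continuousAt (x := (0 : ℝ))
      unfold ContinuousAt at h
      simpa using h
    exact ht.eventually_mem hmem
  obtain ⟨ε, hεK, hε⟩ := ((hev.filter_mono nhdsWithin_le_nhds).and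
    (eventually_mem_nhdsWithin (s := Ioi (0 : ℝ)))).exists
  obtain ⟨p', hp'K, hp'⟩ := hεK
  have hε0 : (0 : ℝ) < ε := hε
  have h1ε : (0 : ℝ) < 1 + ε := by linarith
  set t := ε / (1 + ε) with htdef
  have ht0 : 0 < t := div_pos hε0 h1ε
  have ht1 : t < 1 := by rw [div_lt_one h1ε]; linarith
  set p := t • p0 + (1 - t) • p' with hpdef
  have hpint : p ∈ interior K :=
    hK.combo_interior_closure_mem_interior hp0 (subset_closure hp'K) ht0 (by linarith)
      (by ring)
  have hvp : vproj p = v := by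
    have : vproj p = t • vproj p0 + (1 - t) • vproj p' := by
      rw [hpdef, vproj_isLinear.map_add, vproj_isLinear.map_smul, vproj_isLinear.map_smul]
    rw [this, hp', ← hw0]
    funext i
    simp only [Pi.add_apply, Pi.smul_apply, Pi.sub_apply, smul_eq_mul, htdef]
    field_simp
    ring
  obtain ⟨h0, h1⟩ := vproj_eq_of hvp
  exact ⟨p 2, by rw [← eq_lift3 h0 h1]; exact hpint⟩

/-- If over `v` the interior witnesses satisfy `z1 < z2`, the full fibers are ordered. -/
lemma sep_lemma (h1 : Convex ℝ K1) (h2 : Convex ℝ K2)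
    (hdisj : interior K1 ∩ interior K2 = ∅) {v : Fin 2 → ℝ} {z1 z2 : ℝ}
    (hz1 : lift3 v z1 ∈ interior K1) (hz2 : lift3 v z2 ∈ interior K2) (hlt : z1 < z2) :
    ∀ w1, lift3 v w1 ∈ K1 → ∀ w2, lift3 v w2 ∈ K2 → w1 ≤ w2 := by
  intro w1 hw1 w2 hw2
  by_contra hcon
  push_neg at hcon
  -- notation: a = z1 (interior pt of fiber 1), b = w1, c = w2, d = z2 (interior pt of fiber 2)
  -- known: a < d, c < b
  have key : ∃ z, lift3 v z ∈ interior K1 ∧ lift3 v z ∈ interior K2 := by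
    rcases lt_trichotomy w2 z1 with h | h | h
    · -- c < a : take z = a, which lies in (c, d)
      exact ⟨z1, hz1, between_interior h2 hz2 hw2 (Or.inr ⟨h, hlt⟩)⟩
    · -- c = a : take midpoint of (a, min b d)
      subst h
      set m := min w1 z2 with hm
      have ham : w2 < m := lt_min hcon hlt
      refine ⟨(w2 + m) / 2, ?_, ?_⟩
      · exact between_interior h1 hz1 hw1
          (Or.inl ⟨by linarith, by have := min_le_left w1 z2; linarith⟩)
      · exact between_interior h2 hz2 hw2
          (Or.inr ⟨by linarith, by have := min_le_right w1 z2; linarith⟩)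
    · -- a < c
      rcases le_or_gt z2 w2 with h' | h'
      · -- d ≤ c : take z = d, which lies in (a, b)
        exact ⟨z2, between_interior h1 hz1 hw1 (Or.inl ⟨hlt, by linarith⟩), hz2⟩
      · -- c < d : take midpoint of (c, min b d)
        set m := min w1 z2 with hm
        have hcm : w2 < m := lt_min hcon h'
        refine ⟨(w2 + m) / 2, ?_, ?_⟩
        · exact between_interior h1 hz1 hw1
            (Or.inl ⟨by linarith, by have := min_le_left w1 z2; linarith⟩)
        · exact between_interior h2 hz2 hw2
            (Or.inr ⟨by linarith, by have := min_le_right w1 z2; linarith⟩)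
  obtain ⟨z, hzK1, hzK2⟩ := key
  exact absurd hdisj (Set.Nonempty.ne_empty ⟨lift3 v z, hzK1, hzK2⟩)



lemma below_and_not {K1 K2 : Set (Fin 3 → ℝ)} (h1 : Convex ℝ K1) (h2 : Convex ℝ K2)
    (hne1 : (interior K1).Nonempty) (hne2 : (interior K2).Nonempty)
    (hdisj : interior K1 ∩ interior K2 = ∅)
    {v0 : Fin 2 → ℝ} {z1 z2 : ℝ}
    (hv0 : v0 ∈ interior (vproj '' K1) ∩ interior (vproj '' K2))
    (hz1 : lift3 v0 z1 ∈ interior K1) (hz2 : lift3 v0 z2 ∈ interior K2) (hlt : z1 < z2) :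
    IsBelow K1 K2 ∧ ¬ IsBelow K2 K1 := by
  set U := interior (vproj '' K1) ∩ interior (vproj '' K2) with hU
  set A := {v : Fin 2 → ℝ | ∃ a b, lift3 v a ∈ interior K1 ∧ lift3 v b ∈ interior K2 ∧ a < b}
    with hA
  set B := {v : Fin 2 → ℝ | ∃ a b, lift3 v a ∈ interior K2 ∧ lift3 v b ∈ interior K1 ∧ a < b}
    with hB
  have hopen : ∀ (S T : Set (Fin 3 → ℝ)),
      IsOpen {v : Fin 2 → ℝ | ∃ a b, lift3 v a ∈ interior S ∧ lift3 v b ∈ interior T ∧ a < b} := by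
    intro S T
    rw [isOpen_iff_mem_nhds]
    rintro v ⟨a, b, ha, hb, hab⟩
    have hW : IsOpen {w : Fin 2 → ℝ | lift3 w a ∈ interior S ∧ lift3 w b ∈ interior T} :=
      ((isOpen_interior.preimage (continuous_lift3 a)).inter
        (isOpen_interior.preimage (continuous_lift3 b)))
    filter_upwards [hW.mem_nhds ⟨ha, hb⟩] with w hw
    exact ⟨a, b, hw.1, hw.2, hab⟩
  have hAopen : IsOpen A := hopen K1 K2
  have hBopen : IsOpen B := hopen K2 K1
  have hABdisj : Disjoint A B := by
    rw [Set.disjoint_left]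
    rintro v ⟨a, b, ha, hb, hab⟩ ⟨c, d, hc, hd, hcd⟩
    exact absurd (sep_lemma h1 h2 hdisj ha hb hab d (interior_subset hd) c
      (interior_subset hc)) (not_le.2 hcd)
  have hUsub : U ⊆ A ∪ B := by
    rintro v ⟨hvK1, hvK2⟩
    obtain ⟨a, ha⟩ := exists_interior_lift h1 hne1 hvK1
    obtain ⟨b, hb⟩ := exists_interior_lift h2 hne2 hvK2
    rcases lt_trichotomy a b with h | h | h
    · exact Or.inl ⟨a, b, ha, hb, h⟩
    · exact absurd hdisj (Set.Nonempty.ne_empty ⟨lift3 v a, ha, h ▸ hb⟩)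
    · exact Or.inr ⟨b, a, hb, ha, h⟩
  have hUconv : Convex ℝ U :=
    ((h1.is_linear_image vproj_isLinear).interior).inter
      ((h2.is_linear_image vproj_isLinear).interior)
  have hUA : U ⊆ A :=
    hUconv.isPreconnected.subset_left_of_subset_union hAopen hBopen hABdisj hUsub
      ⟨v0, hv0, ⟨z1, z2, hz1, hz2, hlt⟩⟩
  constructor
  · intro v hv p hp q hq hp0 hp1 hq0 hq1
    rw [interior_inter] at hv
    obtain ⟨a, b, ha, hb, hab⟩ := hUA hv
    exact sep_lemma h1 h2 hdisj ha hb hab (p 2)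
      (by rw [← eq_lift3 hp0 hp1]; exact hp) (q 2)
      (by rw [← eq_lift3 hq0 hq1]; exact hq)
  · intro hcon
    have hv0' : v0 ∈ interior (vproj '' K2 ∩ vproj '' K1) := by
      rw [interior_inter]; exact ⟨hv0.2, hv0.1⟩
    have := hcon v0 hv0' (lift3 v0 z2) (interior_subset hz2)
      (lift3 v0 z1) (interior_subset hz1) rfl rfl rfl rfl
    rw [lift3_two, lift3_two] at this
    linarith

/-- **Well-definedness of the in-front/behind relation.**  Let `t1` and `t2` be two
tetrahedra in `ℝ³` (convex hulls of `4` affinely independent points) with disjoint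
interiors whose vertical projections to `ℝ²` have overlapping interiors.  Then exactly one
of "`t1` is below `t2`" and "`t2` is below `t1`" holds. -/
theorem inFront_welldefined (v1 v2 : Fin 4 → (Fin 3 → ℝ))
    (h1 : AffineIndependent ℝ v1) (h2 : AffineIndependent ℝ v2)
    (hdisj : interior (convexHull ℝ (Set.range v1)) ∩
        interior (convexHull ℝ (Set.range v2)) = ∅)
    (hover : (interior (vproj '' convexHull ℝ (Set.range v1)) ∩
        interior (vproj '' convexHull ℝ (Set.range v2))).Nonempty) :
    Xor' (IsBelow (convexHull ℝ (Set.range v1)) (convexHull ℝ (Set.range v2)))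
         (IsBelow (convexHull ℝ (Set.range v2)) (convexHull ℝ (Set.range v1))) := by
  set K1 := convexHull ℝ (Set.range v1) with hK1
  set K2 := convexHull ℝ (Set.range v2) with hK2
  have hc1 : Convex ℝ K1 := convex_convexHull ℝ _
  have hc2 : Convex ℝ K2 := convex_convexHull ℝ _
  have hcard : ∀ (v : Fin 4 → (Fin 3 → ℝ)), AffineIndependent ℝ v →
      (interior (convexHull ℝ (Set.range v))).Nonempty := by
    intro v hv
    rw [interior_convexHull_nonempty_iff_affineSpan_eq_top]
    rw [hv.affineSpan_eq_top_iff_card_eq_finrank_add_one]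
    simp
  have hne1 : (interior K1).Nonempty := hcard v1 h1
  have hne2 : (interior K2).Nonempty := hcard v2 h2
  obtain ⟨v0, hv01, hv02⟩ := hover
  obtain ⟨a, ha⟩ := exists_interior_lift hc1 hne1 hv01
  obtain ⟨b, hb⟩ := exists_interior_lift hc2 hne2 hv02
  rcases lt_trichotomy a b with h | h | h
  · exact Or.inl (below_and_not hc1 hc2 hne1 hne2 hdisj ⟨hv01, hv02⟩ ha hb h)
  · exact absurd hdisj (Set.Nonempty.ne_empty ⟨lift3 v0 a, ha, h ▸ hb⟩)
  · have hdisj' : interior K2 ∩ interior K1 = ∅ := by rw [Set.inter_comm]; exact hdisj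
    exact Or.inr (below_and_not hc2 hc1 hne2 hne1 hdisj' ⟨hv02, hv01⟩ hb ha h)

end
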